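/- Let R be a binary relation on subgroups of G refining inclusion, and let N ⊆ G be a normal subgroup such that H ⊆ N for every pair (K,H) ∈ R. Then H ⊆ N for every nontrivial relation (K,H) in the transfer system ⟨R⟩ generated by R. -/

import Mathlib

/-! The relations `K → H` with `K = H`, or `K ≤ H ≤ N`, already form a transfer system:
restriction only shrinks the target, and conjugation keeps it inside `N` because `N` is
normal. This transfer system contains `R`, hence contains `⟨R⟩`. -/

open Pointwise

/-- Conjugate of a subgroup: `conjS g H = g H g⁻¹`. -/
def conjS {G : Type} [Group G] (g : G) (H : Subgroup G) : Subgroup G :=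
  MulAut.conj g • H

/-- A `G`-transfer system: a partial order on the subgroups of `G` refining
inclusion, closed under conjugation and restriction. -/
structure TransferSystem (G : Type) [Group G] where
  rel : Subgroup G → Subgroup G → Prop
  le_of_rel : ∀ K H : Subgroup G, rel K H → K ≤ H
  refl : ∀ H : Subgroup G, rel H H
  antisymm : ∀ K H : Subgroup G, rel K H → rel H K → K = H
  trans : ∀ J K H : Subgroup G, rel J K → rel K H → rel J H
  conj : ∀ (K H : Subgroup G) (g : G), rel K H → rel (conjS g K) (conjS g H)
  res : ∀ K H L : Subgroup G, rel K H → L ≤ H → rel (K ⊓ L) L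

/-- The transfer system generated by a relation `R`, described as a relation:
`genRel R K H` holds iff every transfer system containing `R` relates `K` to
`H`; i.e. it is the smallest transfer system containing `R`. -/
def genRel {G : Type} [Group G] (R : Subgroup G → Subgroup G → Prop)
    (K H : Subgroup G) : Prop :=
  ∀ T : TransferSystem G, (∀ A B, R A B → T.rel A B) → T.rel K H

section

variable {G : Type} [Group G]

theorem conjS_mono (g : G) {K H : Subgroup G} (h : K ≤ H) : conjS g K ≤ conjS g H :=
  Subgroup.pointwise_smul_le_pointwise_smul_iff.mpr h

theorem Subgroup.Normal.conjS_eq {N : Subgroup G} (hN : N.Normal) (g : G) : conjS g N = N :=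
  Subgroup.Normal.map_conj_eq (H := N) g

def TransferSystem.belowNormal (N : Subgroup G) (hN : N.Normal) : TransferSystem G where
  rel K H := K = H ∨ K ≤ H ∧ H ≤ N
  le_of_rel := by
    rintro K H (rfl | ⟨hKH, -⟩)
    exacts [le_rfl, hKH]
  refl _ := Or.inl rfl
  antisymm := by
    rintro K H (rfl | ⟨hKH, -⟩) (h | ⟨hHK, -⟩)
    exacts [rfl, rfl, h.symm, le_antisymm hKH hHK]
  trans := by
    rintro J K H (rfl | hJK) (rfl | ⟨hKH, hHN⟩)
    exacts [Or.inl rfl, Or.inr ⟨hKH, hHN⟩, Or.inr hJK, Or.inr ⟨hJK.1.trans hKH, hHN⟩]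
  conj := by
    rintro K H g (rfl | ⟨hKH, hHN⟩)
    · exact Or.inl rfl
    · exact Or.inr ⟨conjS_mono g hKH, hN.conjS_eq g ▸ conjS_mono g hHN⟩
  res := by
    rintro K H L (rfl | ⟨-, hHN⟩) hLH
    · exact Or.inl (inf_eq_right.mpr hLH)
    · exact Or.inr ⟨inf_le_right, hLH.trans hHN⟩

end

theorem stmt7_general {G : Type} [Group G]
    (R : Subgroup G → Subgroup G → Prop) (hR : ∀ K H, R K H → K ≤ H)
    (N : Subgroup G) (hN : N.Normal) (hRN : ∀ K H, R K H → H ≤ N) :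
    ∀ K H : Subgroup G, genRel R K H → K ≠ H → H ≤ N := by
  intro K H hKH hne
  obtain rfl | ⟨-, hHN⟩ :=
    hKH (TransferSystem.belowNormal N hN) fun A B hAB => Or.inr ⟨hR A B hAB, hRN A B hAB⟩
  exacts [absurd rfl hne, hHN]

/-- Let `R` be a relation on subgroups of `G` refining
inclusion and `N ⊆ G` a normal subgroup such that `H ≤ N` for every pair
`(K, H) ∈ R`.  Then `H ≤ N` for every nontrivial relation `(K, H)` in the
transfer system `⟨R⟩` generated by `R`. -/
theorem stmt7 {G : Type} [Group G] [Finite G]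
    (R : Subgroup G → Subgroup G → Prop) (hR : ∀ K H, R K H → K ≤ H)
    (N : Subgroup G) (hN : N.Normal) (hRN : ∀ K H, R K H → H ≤ N) :
    ∀ K H : Subgroup G, genRel R K H → K ≠ H → H ≤ N :=
  stmt7_general R hR N hN hRN
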